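/- arXiv:hep-th/9401146 — 9 statements merged into one kernel-verified Lean document; each statement's English description precedes it below -/
import Mathlib

section
/- The operator d₀ obeys the Leibniz rule with respect to the bimodule structure: for all f, g ∈ A, d₀(f·g) = (d₀ f) · g + f ▷ (d₀ g); explicitly, ((f·g)′, (f·g)″) = (f′·g + f·g′, f″·g + 2·f′·g′ + f·g″) where the right-hand side arises from the right action and twisted left action on Ω¹. -/
open Complex

noncomputable section

/-- The algebra `A = C^∞(ℝ, ℂ)`: we work with plain functions `ℝ → ℂ`
and carry smoothness as predicates. -/
abbrev A := ℝ → ℂ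

/-- Membership in `C^∞(ℝ, ℂ)`. -/
def SmoothFn (f : A) : Prop := ContDiff ℝ (⊤ : ℕ∞) f

/-- One-forms `Ω¹`: the pair `(a, b)` represents `dx·a + η·b`. -/
abbrev Ω1 := A × A

/-- A one-form with smooth components. -/
def SmoothForm (m : Ω1) : Prop := SmoothFn m.1 ∧ SmoothFn m.2

/-- The twisted left action `f ▷ (a, b) = (f·a, f·b + 2·f′·a)`,
encoding `f·dx = dx·f + 2η·f′` and `f·η = η·f`. -/
noncomputable def leftAct (f : A) (m : Ω1) : Ω1 :=
  (f * m.1, f * m.2 + 2 * deriv f * m.1)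

/-- The right action `(a, b)·g = (a·g, b·g)`. -/
def rightAct (m : Ω1) (g : A) : Ω1 := (m.1 * g, m.2 * g)

/-- The exterior derivative `d₀ f = (f′, f″)`, i.e. `df = dx·f′ + η·f″`. -/
noncomputable def d0 (f : A) : Ω1 := (deriv f, deriv (deriv f))

/-- Two-forms `Ω²`: the pair `(u, v)` represents `dx•dx·u + dx•η·v`. -/
abbrev Ω2 := A × A

/-- The product of one-forms `(a, b) • (c, d) = (a·c, 2·a′·c + a·d − b·c)`,
induced by `η•η = 0` and `η•dx = −dx•η`. -/
noncomputable def wedge (m n : Ω1) : Ω2 :=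
  (m.1 * n.1, 2 * deriv m.1 * n.1 + m.1 * n.2 - m.2 * n.1)

/-- The derivative on one-forms, `d₁(a, b) = (b − a′, b′ − a″)`. -/
noncomputable def d1 (m : Ω1) : Ω2 :=
  (m.2 - deriv m.1, deriv m.2 - deriv (deriv m.1))

/-- Pointwise complex conjugation on `A`. -/
noncomputable def conjA (f : A) : A := fun x => (starRingEnd ℂ) (f x)

/-- The conjugation on `Ω¹`: `(a, b)* = (conj a, 2·(conj a)′ − conj b)`,
encoding `dx* = dx`, `η* = −η`. -/
noncomputable def star1 (m : Ω1) : Ω1 :=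
  (conjA m.1, 2 * deriv (conjA m.1) - conjA m.2)

/-- The conjugation on `Ω²` is componentwise. -/
noncomputable def star2 (w : Ω2) : Ω2 := (conjA w.1, conjA w.2)

/-- The one-form `dx = (1, 0)`. -/
def dxF : Ω1 := (1, 0)

/-- The one-form `η = (0, 1)`. -/
def etaF : Ω1 := (0, 1)

lemma sm_deriv (f : A) (hf : SmoothFn f) : SmoothFn (deriv f) :=
  (contDiff_infty_iff_deriv.mp hf).2

lemma diff_of_smooth (f : A) (hf : SmoothFn f) : Differentiable ℝ f :=
  hf.differentiable (by norm_num)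

lemma deriv_mul_fn (f g : A) (hf : SmoothFn f) (hg : SmoothFn g) :
    deriv (f * g) = deriv f * g + f * deriv g := by
  funext x
  exact deriv_mul (diff_of_smooth f hf).differentiableAt
    (diff_of_smooth g hg).differentiableAt

/-- the Leibniz rule `d₀(f·g) = (d₀ f)·g + f ▷ (d₀ g)`. -/
theorem d0_leibniz (f g : A) (hf : SmoothFn f) (hg : SmoothFn g) :
    d0 (f * g) = rightAct (d0 f) g + leftAct f (d0 g) ∧
    d0 (f * g) = (deriv f * g + f * deriv g,
      deriv (deriv f) * g + 2 * deriv f * deriv g + f * deriv (deriv g)) := by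
  have hf' := sm_deriv f hf
  have hg' := sm_deriv g hg
  have h1 : deriv (f * g) = deriv f * g + f * deriv g := deriv_mul_fn f g hf hg
  have h2 : deriv (deriv (f * g)) =
      deriv (deriv f) * g + 2 * deriv f * deriv g + f * deriv (deriv g) := by
    rw [h1]
    funext x
    rw [show deriv (deriv f * g + f * deriv g) x
        = deriv (deriv f * g) x + deriv (f * deriv g) x from
      deriv_add ((diff_of_smooth _ (hf'.mul hg)).differentiableAt)
        ((diff_of_smooth _ (hf.mul hg')).differentiableAt),
      deriv_mul_fn (deriv f) g hf' hg, deriv_mul_fn f (deriv g) hf hg']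
    simp only [Pi.add_apply, Pi.mul_apply, Pi.ofNat_apply]
    ring
  have hmain : d0 (f * g) = (deriv f * g + f * deriv g,
      deriv (deriv f) * g + 2 * deriv f * deriv g + f * deriv (deriv g)) := by
    unfold d0; rw [h2, h1]
  refine ⟨?_, hmain⟩
  rw [hmain]
  simp only [rightAct, leftAct, d0, Prod.mk_add_mk]
  refine Prod.ext ?_ ?_ <;> funext x <;>
    simp only [Pi.add_apply, Pi.mul_apply, Pi.ofNat_apply] <;> ring
end
end

section
/- The product of one-forms is A-balanced: for all f ∈ A and m, n ∈ Ω¹, (m · f) • n = m • (f ▷ n), so • descends to the tensor product Ω¹ ⊗_A Ω¹. -/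
open Complex

noncomputable section

/-- the product of one-forms is `A`-balanced:
`(m·f) • n = m • (f ▷ n)`. -/
theorem wedge_balanced (f : A) (hf : SmoothFn f) (m n : Ω1)
    (hm : SmoothForm m) (hn : SmoothForm n) :
    wedge (rightAct m f) n = wedge m (leftAct f n) := by
  have hm1 : Differentiable ℝ m.1 := (hm.1.differentiable (by simp))
  have hfd : Differentiable ℝ f := (hf.differentiable (by simp))
  have hd : deriv (m.1 * f) = deriv m.1 * f + m.1 * deriv f := by
    funext x
    exact deriv_fun_mul (hm1 x) (hfd x)
  unfold wedge rightAct leftAct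
  simp only [hd]
  refine Prod.ext ?_ ?_ <;> (funext x; simp [Pi.mul_apply, Pi.add_apply]; ring)
end
end

section
/- The derivative d₁ obeys the graded Leibniz rule with respect to the right action: for all f ∈ A and ω ∈ Ω¹, d₁(ω · f) = (d₁ ω)·f − ω • (d₀ f), where (d₁ ω)·f is the pointwise (componentwise) scalar multiple on Ω². -/
open Complex

noncomputable section

/-- the graded Leibniz rule `d₁(ω·f) = (d₁ ω)·f − ω • (d₀ f)`. -/
theorem d1_leibniz_right (f : A) (hf : SmoothFn f) (ω : Ω1) (hω : SmoothForm ω) :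
    d1 (rightAct ω f) = ((d1 ω).1 * f, (d1 ω).2 * f) - wedge ω (d0 f) := by

  obtain ⟨a, b⟩ := ω
  obtain ⟨ha, hb⟩ := hω
  have hfd : Differentiable ℝ f := hf.differentiable (by simp)
  have had : Differentiable ℝ a := ha.differentiable (by simp)
  have hbd : Differentiable ℝ b := hb.differentiable (by simp)
  have hf' : ContDiff ℝ (⊤ : ℕ∞) (deriv f) := (contDiff_infty_iff_deriv.mp hf).2
  have ha' : ContDiff ℝ (⊤ : ℕ∞) (deriv a) := (contDiff_infty_iff_deriv.mp ha).2
  have hb' : ContDiff ℝ (⊤ : ℕ∞) (deriv b) := (contDiff_infty_iff_deriv.mp hb).2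
  have hfd' : Differentiable ℝ (deriv f) := hf'.differentiable (by simp)
  have had' : Differentiable ℝ (deriv a) := ha'.differentiable (by simp)
  have hbd' : Differentiable ℝ (deriv b) := hb'.differentiable (by simp)
  simp only [d1, rightAct, wedge, d0, Prod.mk_sub_mk, Prod.mk.injEq]
  constructor
  · funext x
    have : deriv (a * f) = deriv a * f + a * deriv f := by
      funext y; exact deriv_mul (had y) (hfd y)
    simp only [this, Pi.sub_apply, Pi.mul_apply, Pi.add_apply]
    ring
  · funext x
    have h1 : deriv (b * f) = deriv b * f + b * deriv f := by
      funext y; exact deriv_mul (hbd y) (hfd y)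
    have h2 : deriv (a * f) = deriv a * f + a * deriv f := by
      funext y; exact deriv_mul (had y) (hfd y)
    have h3 : deriv (deriv a * f + a * deriv f)
        = (deriv (deriv a) * f + deriv a * deriv f)
          + (deriv a * deriv f + a * deriv (deriv f)) := by
      funext y
      rw [show deriv a * f + a * deriv f = fun z => deriv a z * f z + a z * deriv f z from rfl]
      rw [deriv_fun_add (f := fun z => deriv a z * f z) (g := fun z => a z * deriv f z) ((had'.mul hfd) y) ((had.mul hfd') y),
          deriv_fun_mul (had' y) (hfd y), deriv_fun_mul (had y) (hfd' y)]
      rfl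
    simp only [h1, h2, h3, Pi.sub_apply, Pi.mul_apply, Pi.add_apply, Pi.ofNat_apply]
    ring
end
end

section
/- The conjugation is an antilinear anti-automorphism of the differential algebra in degrees 0, 1, 2: for all f ∈ A and m, n ∈ Ω¹ one has (m*)* = m, (f ▷ m)* = m* · conj(f), (m · f)* = conj(f) ▷ m*, and (m • n)* = n* • m* (where the star on Ω² is componentwise complex conjugation). -/
open Complex

noncomputable section

lemma conjA_deriv (f : A) : deriv (conjA f) = conjA (deriv f) := by
  have : conjA f = fun x => star (f x) := rfl
  rw [this, deriv.star']
  rfl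

lemma conjA_conjA (f : A) : conjA (conjA f) = f := by
  funext x; simp [conjA]

lemma conjA_mul (f g : A) : conjA (f * g) = conjA f * conjA g := by
  funext x; simp [conjA]

lemma conjA_add (f g : A) : conjA (f + g) = conjA f + conjA g := by
  funext x; simp [conjA]

lemma conjA_sub (f g : A) : conjA (f - g) = conjA f - conjA g := by
  funext x; simp [conjA]

lemma conjA_two : conjA 2 = 2 := by
  funext x
  show (starRingEnd ℂ) 2 = 2
  exact map_ofNat _ 2

lemma smoothFn_conjA {f : A} (hf : SmoothFn f) : SmoothFn (conjA f) :=
  Complex.conjCLE.contDiff.comp hf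

/-- the conjugation is an antilinear anti-automorphism in
degrees 0, 1, 2. -/
theorem star_antiautomorphism (f : A) (hf : SmoothFn f) (m n : Ω1)
    (hm : SmoothForm m) (hn : SmoothForm n) :
    star1 (star1 m) = m ∧
    star1 (leftAct f m) = rightAct (star1 m) (conjA f) ∧
    star1 (rightAct m f) = leftAct (conjA f) (star1 m) ∧
    star2 (wedge m n) = wedge (star1 n) (star1 m) := by
  obtain ⟨ha, hb⟩ := hm
  obtain ⟨hc, hd⟩ := hn
  have hca := smoothFn_conjA ha
  have hcc := smoothFn_conjA hc
  have hcf := smoothFn_conjA hf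
  refine ⟨?_, ?_, ?_, ?_⟩
  · show (conjA (conjA m.1), 2 * deriv (conjA (conjA m.1)) -
      conjA (2 * deriv (conjA m.1) - conjA m.2)) = m
    simp only [conjA_sub, conjA_mul, conjA_two, conjA_deriv, conjA_conjA]
    ext1 <;> ring
  · show (conjA (f * m.1), 2 * deriv (conjA (f * m.1)) -
      conjA (f * m.2 + 2 * deriv f * m.1)) =
      ((conjA m.1) * conjA f, (2 * deriv (conjA m.1) - conjA m.2) * conjA f)
    simp only [conjA_add, conjA_mul, conjA_two, conjA_deriv,
      deriv_mul_fn _ _ hcf hca]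
    ext1 <;> ring
  · show (conjA (m.1 * f), 2 * deriv (conjA (m.1 * f)) - conjA (m.2 * f)) =
      (conjA f * conjA m.1,
        conjA f * (2 * deriv (conjA m.1) - conjA m.2) + 2 * deriv (conjA f) * conjA m.1)
    simp only [conjA_mul, conjA_deriv, deriv_mul_fn _ _ hca hcf]
    ext1 <;> ring
  · show (conjA (m.1 * n.1), conjA (2 * deriv m.1 * n.1 + m.1 * n.2 - m.2 * n.1)) =
      ((conjA n.1) * conjA m.1,
        2 * deriv (conjA n.1) * conjA m.1 + conjA n.1 * (2 * deriv (conjA m.1) - conjA m.2)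
          - (2 * deriv (conjA n.1) - conjA n.2) * conjA m.1)
    simp only [conjA_sub, conjA_add, conjA_mul, conjA_two, conjA_deriv]
    ext1 <;> ring
end
end

section
/- The conjugation graded-commutes with the exterior derivative: for all f ∈ A, d₀(conj(f)) = (d₀ f)*, and for all ω ∈ Ω¹, d₁(ω*) = −(d₁ ω)*. -/
open Complex

noncomputable section

lemma derivConjA (g : A) : deriv (conjA g) = conjA (deriv g) := by
  have : conjA g = fun x => star (g x) := rfl
  rw [this, deriv.star']
  rfl

/-- the conjugation graded-commutes with the exterior derivative:
`d₀(conj f) = (d₀ f)*` and `d₁(ω*) = −(d₁ ω)*`. -/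
theorem star_graded_commutes_d (f : A) (hf : SmoothFn f) (ω : Ω1) (hω : SmoothForm ω) :
    d0 (conjA f) = star1 (d0 f) ∧ d1 (star1 ω) = -(star2 (d1 ω)) := by
  constructor
  · simp only [d0, star1, derivConjA]
    refine Prod.ext rfl ?_
    simp only [derivConjA]
    ring
  · obtain ⟨a, b⟩ := ω
    obtain ⟨ha, hb⟩ := hω
    have ha' : Differentiable ℝ (deriv a) :=
      ((contDiff_infty_iff_deriv.mp ha).2).differentiable (by simp)
    have hbd : Differentiable ℝ b := hb.differentiable (by simp)
    have key : (2 : A) * deriv (conjA a) - conjA b = conjA (2 * deriv a - b) := by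
      funext x
      simp [derivConjA, conjA, map_ofNat]
    have hder : deriv ((2 : A) * deriv a - b) = (2 : A) * deriv (deriv a) - deriv b := by
      funext x
      rw [show ((2:A) * deriv a - b : A) = (fun y => 2 * deriv a y - b y) from rfl]
      rw [deriv_fun_sub ((ha'.const_mul 2).differentiableAt) hbd.differentiableAt,
        deriv_const_mul 2 ha'.differentiableAt]
      rfl
    simp only [d1, star1]
    rw [key]
    simp only [derivConjA, hder, star2, Prod.neg_mk]
    refine Prod.ext ?_ ?_ <;> funext x <;> simp [conjA, map_ofNat] <;> ring
end
end

section
/- Any metric on Ω¹ vanishes on the pair (η, η): if G : Ω¹ × Ω¹ → A is biadditive and middle-linear (G(f ▷ m, n) = f·G(m, n), G(m · f, n) = G(m, f ▷ n), and G(m, n · f) = G(m, n)·f for all f ∈ A, m, n ∈ Ω¹), then G(η, η) = 0, where η = (0, 1). -/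
open Complex

noncomputable section

/-- any metric on `Ω¹` vanishes on `(η, η)`. -/
theorem metric_eta_eta_zero (G : Ω1 → Ω1 → A)
(haddl : ∀ m m' n : Ω1, SmoothForm m → SmoothForm m' → SmoothForm n →
      G (m + m') n = G m n + G m' n)
    (haddr : ∀ m n n' : Ω1, SmoothForm m → SmoothForm n → SmoothForm n' →
      G m (n + n') = G m n + G m n')
    (hleft : ∀ f : A, SmoothFn f → ∀ m n : Ω1, SmoothForm m → SmoothForm n →
      G (leftAct f m) n = f * G m n)
    (hmid : ∀ f : A, SmoothFn f → ∀ m n : Ω1, SmoothForm m → SmoothForm n →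
      G (rightAct m f) n = G m (leftAct f n))
    (hright : ∀ f : A, SmoothFn f → ∀ m n : Ω1, SmoothForm m → SmoothForm n →
      G m (rightAct n f) = G m n * f) :
    G etaF etaF = 0 := by
  -- the smooth function f(x) = x
  set f : A := fun x => (x : ℂ) with hfdef
  have hf : SmoothFn f := Complex.ofRealCLM.contDiff
  have hdf : deriv f = 1 := by
    funext x
    have h : HasDerivAt f ((1 : ℝ) : ℂ) x := by
      exact (hasDerivAt_id' x).ofReal_comp
    simpa using h.deriv
  have s0 : SmoothFn (0 : A) := contDiff_const
  have s1 : SmoothFn (1 : A) := contDiff_const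
  have s2 : SmoothFn (2 : A) := contDiff_const
  have sdx : SmoothForm dxF := ⟨s1, s0⟩
  have seta : SmoothForm etaF := ⟨s0, s1⟩
  -- relation: f ▷ dx = dx·f + η·(2f′) = (f,0) + (0,2)
  have h1 : leftAct f dxF = ((f, (0 : A)) : Ω1) + (((0 : A), (2 : A)) : Ω1) := by
    simp [leftAct, dxF, hdf, Prod.ext_iff]
  have hp : SmoothForm ((f, (0 : A)) : Ω1) := ⟨hf, s0⟩
  have hq : SmoothForm (((0 : A), (2 : A)) : Ω1) := ⟨s0, s2⟩
  -- G((f,0), η) = G(dx, η) · f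
  have hpG : G ((f, (0 : A)) : Ω1) etaF = G dxF etaF * f := by
    have e1 : ((f, (0 : A)) : Ω1) = rightAct dxF f := by
      simp [rightAct, dxF, Prod.ext_iff]
    have e2 : leftAct f etaF = rightAct etaF f := by
      simp [leftAct, rightAct, etaF, Prod.ext_iff]
    rw [e1, hmid f hf dxF etaF sdx seta, e2, hright f hf dxF etaF sdx seta]
  -- G((0,2), η) = 2 · G(η, η)
  have hqG : G (((0 : A), (2 : A)) : Ω1) etaF = 2 * G etaF etaF := by
    have e3 : (((0 : A), (2 : A)) : Ω1) = leftAct (2 : A) etaF := by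
      simp [leftAct, etaF, Prod.ext_iff]
    rw [e3, hleft (2 : A) s2 etaF etaF seta seta]
  have key : f * G dxF etaF = G dxF etaF * f + 2 * G etaF etaF := by
    rw [← hleft f hf dxF etaF sdx seta, h1,
      haddl _ _ _ hp hq seta, hpG, hqG]
  rw [mul_comm (G dxF etaF) f] at key
  have h2z : (2 : A) * G etaF etaF = 0 := by
    have := key.symm
    rwa [add_eq_left] at this
  funext x
  have := congrFun h2z x
  simp only [Pi.mul_apply, Pi.zero_apply, Pi.ofNat_apply] at this
  have h2 : (2 : ℂ) ≠ 0 := two_ne_zero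
  simpa [h2] using this
end
end

section
/- Any metric on Ω¹ is antisymmetric in the mixed entries: if G : Ω¹ × Ω¹ → A is biadditive and middle-linear (G(f ▷ m, n) = f·G(m, n), G(m · f, n) = G(m, f ▷ n), and G(m, n · f) = G(m, n)·f for all f ∈ A, m, n ∈ Ω¹), then G(dx, η) = −G(η, dx), where dx = (1, 0) and η = (0, 1). -/
open Complex

noncomputable section

/-- any metric on `Ω¹` satisfies `G(dx, η) = −G(η, dx)`. -/
theorem metric_mixed_antisymm (G : Ω1 → Ω1 → A)
(haddl : ∀ m m' n : Ω1, SmoothForm m → SmoothForm m' → SmoothForm n →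
      G (m + m') n = G m n + G m' n)
    (haddr : ∀ m n n' : Ω1, SmoothForm m → SmoothForm n → SmoothForm n' →
      G m (n + n') = G m n + G m n')
    (hleft : ∀ f : A, SmoothFn f → ∀ m n : Ω1, SmoothForm m → SmoothForm n →
      G (leftAct f m) n = f * G m n)
    (hmid : ∀ f : A, SmoothFn f → ∀ m n : Ω1, SmoothForm m → SmoothForm n →
      G (rightAct m f) n = G m (leftAct f n))
    (hright : ∀ f : A, SmoothFn f → ∀ m n : Ω1, SmoothForm m → SmoothForm n →
      G m (rightAct n f) = G m n * f) :
    G dxF etaF = -G etaF dxF := by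

  -- the coordinate function x
  set f : A := fun t : ℝ => (t : ℂ) with hf
  have hfsm : SmoothFn f := Complex.ofRealCLM.contDiff
  have hderivf : deriv f = fun _ => (1 : ℂ) := by
    funext x
    have h : HasDerivAt (fun t : ℝ => (t : ℂ)) 1 x := by
      exact Complex.ofRealCLM.hasDerivAt (x := x)
    exact h.deriv
  have hderiv2 : deriv (2 : A) = 0 := by
    funext x
    show deriv (fun _ : ℝ => (2 : ℂ)) x = 0
    simp
  have h2sm : SmoothFn (2 : A) := contDiff_const
  have hdx : SmoothForm dxF := ⟨contDiff_const, contDiff_const⟩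
  have heta : SmoothForm etaF := ⟨contDiff_const, contDiff_const⟩
  have hdxf : SmoothForm (rightAct dxF f) := by
    constructor
    · simpa [rightAct, dxF] using hfsm
    · simp [rightAct, dxF, SmoothFn]; exact contDiff_const
  have heta2 : SmoothForm (rightAct etaF (2:A)) := by
    constructor
    · simp [rightAct, etaF, SmoothFn]; exact contDiff_const
    · simp [rightAct, etaF, SmoothFn]; exact contDiff_const
  -- key decomposition: x ▷ dx = dx·x + η·2
  have hdecomp : leftAct f dxF = rightAct dxF f + rightAct etaF (2:A) := by
    ext t
    · simp [leftAct, rightAct, dxF, etaF, mul_comm]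
    · simp [leftAct, rightAct, dxF, etaF, hderivf]
  have hdecomp2 : leftAct (2:A) dxF = rightAct dxF (2:A) := by
    ext t
    · simp [leftAct, rightAct, dxF, mul_comm]
    · simp [leftAct, rightAct, dxF, hderiv2]
  have e1 : G (leftAct f dxF) dxF = f * G dxF dxF := hleft f hfsm dxF dxF hdx hdx
  have e2 : G (leftAct f dxF) dxF
      = G (rightAct dxF f) dxF + G (rightAct etaF (2:A)) dxF := by
    rw [hdecomp]; exact haddl _ _ _ hdxf heta2 hdx
  have e3 : G (rightAct dxF f) dxF = G dxF dxF * f + G dxF etaF * 2 := by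
    rw [hmid f hfsm dxF dxF hdx hdx, hdecomp,
      haddr dxF _ _ hdx hdxf heta2, hright f hfsm dxF dxF hdx hdx,
      hright (2:A) h2sm dxF etaF hdx heta]
  have e4 : G (rightAct etaF (2:A)) dxF = G etaF dxF * 2 := by
    rw [hmid (2:A) h2sm etaF dxF heta hdx, hdecomp2,
      hright (2:A) h2sm etaF dxF heta hdx]
  have key : f * G dxF dxF = G dxF dxF * f + G dxF etaF * 2 + G etaF dxF * 2 := by
    rw [← e1, e2, e3, e4]
  have hcomm : f * G dxF dxF = G dxF dxF * f := mul_comm _ _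
  have hz : G dxF etaF * 2 + G etaF dxF * 2 = 0 := by
    have := key
    rw [hcomm] at this
    linear_combination -this
  funext t
  have ht := congrFun hz t
  simp only [Pi.add_apply, Pi.mul_apply, Pi.ofNat_apply, Pi.zero_apply,
    Pi.neg_apply] at ht ⊢
  linear_combination ht / 2
end
end

section
/- A hermitian metric has real diagonal and mixed components: if G : Ω¹ × Ω¹ → A is biadditive, middle-linear, and hermitian in the sense that G(m, n) = conj(G(n*, m*)) for all m, n ∈ Ω¹, then the functions G(dx, dx) and G(dx, η) are real-valued, where dx = (1, 0) and η = (0, 1). -/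
open Complex

noncomputable section

section Aux

lemma smoothFn_zero : SmoothFn (0 : A) := contDiff_const
lemma smoothFn_one : SmoothFn (1 : A) := contDiff_const

/-- the coordinate function -/
noncomputable def idc : A := fun x : ℝ => (x : ℂ)

lemma smooth_idc : SmoothFn idc := Complex.ofRealCLM.contDiff

lemma deriv_idc : deriv idc = 1 := by
  funext x
  have : HasDerivAt idc ((Complex.ofRealCLM : ℝ →L[ℝ] ℂ) 1) x :=
    Complex.ofRealCLM.hasDerivAt
  simpa using this.deriv

lemma derivA_zero : deriv (0 : A) = 0 := by funext x; exact deriv_const x 0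
lemma derivA_one : deriv (1 : A) = 0 := by funext x; exact deriv_const x 1
lemma derivA_two : deriv (2 : A) = 0 := by funext x; exact deriv_const x 2

end Aux

/-- a hermitian metric has real-valued `G(dx, dx)` and
`G(dx, η)`. -/
theorem hermitian_metric_real (G : Ω1 → Ω1 → A)
(haddl : ∀ m m' n : Ω1, SmoothForm m → SmoothForm m' → SmoothForm n →
      G (m + m') n = G m n + G m' n)
    (haddr : ∀ m n n' : Ω1, SmoothForm m → SmoothForm n → SmoothForm n' →
      G m (n + n') = G m n + G m n')
    (hleft : ∀ f : A, SmoothFn f → ∀ m n : Ω1, SmoothForm m → SmoothForm n →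
      G (leftAct f m) n = f * G m n)
    (hmid : ∀ f : A, SmoothFn f → ∀ m n : Ω1, SmoothForm m → SmoothForm n →
      G (rightAct m f) n = G m (leftAct f n))
    (hright : ∀ f : A, SmoothFn f → ∀ m n : Ω1, SmoothForm m → SmoothForm n →
      G m (rightAct n f) = G m n * f)
    (hherm : ∀ m n : Ω1, SmoothForm m → SmoothForm n →
      G m n = conjA (G (star1 n) (star1 m))) :
    (∀ x : ℝ, (G dxF dxF x).im = 0) ∧ (∀ x : ℝ, (G dxF etaF x).im = 0) := by
  have sdx : SmoothForm dxF := ⟨smoothFn_one, smoothFn_zero⟩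
  have seta : SmoothForm etaF := ⟨smoothFn_zero, smoothFn_one⟩
  have szero : SmoothForm (0 : Ω1) := ⟨smoothFn_zero, smoothFn_zero⟩
  have sneg : SmoothForm ((0, -1) : Ω1) := ⟨smoothFn_zero, smoothFn_one.neg⟩
  have conj0 : conjA (0 : A) = 0 := by funext x; simp [conjA]
  have conj1 : conjA (1 : A) = 1 := by funext x; simp [conjA]
  have star_dx : star1 dxF = dxF := by
    simp [star1, dxF, conj0, conj1, derivA_one, derivA_zero]
  have star_eta : star1 etaF = ((0, -1) : Ω1) := by
    simp [star1, etaF, conj0, conj1, derivA_zero]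
  have hdd : G dxF dxF = conjA (G dxF dxF) := by
    have := hherm dxF dxF sdx sdx
    rwa [star_dx] at this
  constructor
  · intro x
    have hx := congrFun hdd x
    have him : (G dxF dxF x).im = -(G dxF dxF x).im := by
      conv_lhs => rw [hx]
      simp [conjA]
    linarith
  · have hG0 : G 0 dxF = 0 := by
      have h := haddl 0 0 dxF szero szero sdx
      simp only [add_zero] at h
      exact left_eq_add.mp h
    have hGneg : G ((0, -1) : Ω1) dxF = - G etaF dxF := by
      have h := haddl etaF ((0, -1) : Ω1) dxF seta sneg sdx
      have hsum : etaF + ((0, -1) : Ω1) = 0 := by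
        simp [etaF, Prod.ext_iff]
      rw [hsum, hG0] at h
      linear_combination -h
    have sid : SmoothFn idc := smooth_idc
    have s2 : SmoothFn (2 : A) := contDiff_const
    have e1 : rightAct dxF idc = (idc, 0) := by
      simp [rightAct, dxF, Prod.ext_iff]
    have e2 : rightAct etaF 2 = ((0 : A), (2 : A)) := by
      simp [rightAct, etaF, Prod.ext_iff]
    have sr1 : SmoothForm (rightAct dxF idc) := by
      rw [e1]; exact ⟨sid, smoothFn_zero⟩
    have sr2 : SmoothForm (rightAct etaF 2) := by
      rw [e2]; exact ⟨smoothFn_zero, s2⟩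
    have hdecomp : leftAct idc dxF = rightAct dxF idc + rightAct etaF 2 := by
      simp [leftAct, rightAct, dxF, etaF, deriv_idc, Prod.ext_iff]
    have key : idc * G dxF dxF =
        G dxF dxF * idc + G dxF etaF * 2 + G etaF dxF * 2 := by
      have hl : G (leftAct idc dxF) dxF = idc * G dxF dxF :=
        hleft idc sid dxF dxF sdx sdx
      have hsplit : G (leftAct idc dxF) dxF
          = G (rightAct dxF idc) dxF + G (rightAct etaF 2) dxF := by
        rw [hdecomp]; exact haddl _ _ _ sr1 sr2 sdx
      have h1 : G (rightAct dxF idc) dxF = G dxF dxF * idc + G dxF etaF * 2 := by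
        rw [hmid idc sid dxF dxF sdx sdx, hdecomp, haddr dxF _ _ sdx sr1 sr2,
          hright idc sid dxF dxF sdx sdx, hright (2 : A) s2 dxF etaF sdx seta]
      have h2 : G (rightAct etaF 2) dxF = G etaF dxF * 2 := by
        rw [hmid (2 : A) s2 etaF dxF seta sdx]
        have e3 : leftAct (2 : A) dxF = rightAct dxF 2 := by
          simp [leftAct, rightAct, dxF, derivA_two, Prod.ext_iff]
        rw [e3, hright (2 : A) s2 etaF dxF seta sdx]
      rw [hl.symm.trans hsplit, h1, h2]
    have hswap : G etaF dxF = - G dxF etaF := by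
      have hcomm : idc * G dxF dxF = G dxF dxF * idc := mul_comm _ _
      have hsum : G dxF etaF * 2 + G etaF dxF * 2 = 0 := by
        linear_combination hcomm - key
      funext x
      have hx := congrFun hsum x
      simp only [Pi.add_apply, Pi.mul_apply, Pi.zero_apply, Pi.neg_apply] at hx ⊢
      have h2 : (2 : A) x = (2 : ℂ) := rfl
      rw [h2] at hx
      linear_combination hx / 2
    have hde : G dxF etaF = conjA (G dxF etaF) := by
      have h := hherm dxF etaF sdx seta
      rw [star_eta, star_dx, hGneg, hswap, neg_neg] at h
      exact h
    intro x
    have hx := congrFun hde x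
    have him : (G dxF etaF x).im = -(G dxF etaF x).im := by
      conv_lhs => rw [hx]
      simp [conjA]
    linarith
end
end

section
/- Gauge transformation of the connection: let φ, Φ, Ψ : ℝ → ℝ be smooth real-valued functions, u = exp(i·φ) ∈ A, and A = (i·Φ, Ψ + i·Φ′) ∈ Ω¹. Then the gauge-transformed connection conj(u) ▷ (A · u) + conj(u) ▷ (d₀ u) equals (i·(Φ + φ′), (Ψ + 2·Φ·φ′ + (φ′)²) + i·(Φ + φ′)′); i.e. the real components transform as Φ ↦ Φ + φ′ and Ψ ↦ Ψ + 2·Φ·φ′ + (φ′)². -/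
open Complex

noncomputable section

/-- the gauge transformation `A ↦ u⁻¹·A·u + u⁻¹·du` with
`u = exp(i·φ)` acts on the real components by `Φ ↦ Φ + φ′` and
`Ψ ↦ Ψ + 2·Φ·φ′ + (φ′)²`. -/
theorem gauge_transformation (φ Φ Ψ : ℝ → ℝ)
    (hφ : ContDiff ℝ (⊤ : ℕ∞) φ) (hΦ : ContDiff ℝ (⊤ : ℕ∞) Φ)
    (hΨ : ContDiff ℝ (⊤ : ℕ∞) Ψ) :
    let u : A := fun x => Complex.exp (Complex.I * (φ x : ℂ))
    let Aconn : Ω1 := (fun x => Complex.I * (Φ x : ℂ),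
      fun x => (Ψ x : ℂ) + Complex.I * (Complex.ofReal (deriv Φ x)))
    leftAct (conjA u) (rightAct Aconn u) + leftAct (conjA u) (d0 u) =
      (fun x => Complex.I * ((Φ x + deriv φ x : ℝ) : ℂ),
       fun x => ((Ψ x + 2 * Φ x * deriv φ x + (deriv φ x) ^ 2 : ℝ) : ℂ) +
         Complex.I * (Complex.ofReal (deriv (fun t => Φ t + deriv φ t) x))) := by
  intro u Aconn
  have hφd : Differentiable ℝ φ := hφ.differentiable (by simp)
  have hφ' : ContDiff ℝ (⊤ : ℕ∞) (deriv φ) := (contDiff_infty_iff_deriv.mp hφ).2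
  have hφ'd : Differentiable ℝ (deriv φ) := hφ'.differentiable (by simp)
  have hΦd : Differentiable ℝ Φ := hΦ.differentiable (by simp)
  have hiφ : ∀ x, HasDerivAt (fun t => Complex.I * (φ t : ℂ))
      (Complex.I * (Complex.ofReal (deriv φ x))) x := fun x =>
    ((hφd x).hasDerivAt.ofReal_comp).const_mul Complex.I
  have hu : ∀ x, HasDerivAt u
      (Complex.exp (Complex.I * (φ x : ℂ)) * (Complex.I * (Complex.ofReal (deriv φ x)))) x :=
    fun x => (hiφ x).cexp
  have hcu : conjA u = fun x => Complex.exp (-(Complex.I * (φ x : ℂ))) := by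
    funext x
    simp only [conjA, u, ← Complex.exp_conj, map_mul, Complex.conj_I,
      Complex.conj_ofReal, neg_mul]
  have hcu' : ∀ x, HasDerivAt (conjA u)
      (Complex.exp (-(Complex.I * (φ x : ℂ))) * (-(Complex.I * (Complex.ofReal (deriv φ x))))) x := by
    rw [hcu]; intro x; exact ((hiφ x).neg).cexp
  have hdu : deriv u = fun x =>
      Complex.exp (Complex.I * (φ x : ℂ)) * (Complex.I * (Complex.ofReal (deriv φ x))) :=
    funext fun x => (hu x).deriv
  have hddu : ∀ x, HasDerivAt (deriv u)
      (Complex.exp (Complex.I * (φ x : ℂ)) * (Complex.I * (Complex.ofReal (deriv φ x))) *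
          (Complex.I * (Complex.ofReal (deriv φ x))) +
        Complex.exp (Complex.I * (φ x : ℂ)) * (Complex.I * (Complex.ofReal (deriv (deriv φ) x)))) x := by
    rw [hdu]; intro x
    exact (hu x).mul (((hφ'd x).hasDerivAt.ofReal_comp).const_mul Complex.I)
  have hne : ∀ x : ℝ, Complex.exp (Complex.I * (φ x : ℂ)) ≠ 0 := fun x => Complex.exp_ne_zero _
  have hderivsum : ∀ x, deriv (fun t => Φ t + deriv φ t) x = deriv Φ x + deriv (deriv φ) x :=
    fun x => deriv_add (hΦd x) (hφ'd x)
  have hcd : ∀ x, deriv (fun x => Complex.exp (-(Complex.I * (φ x : ℂ)))) x =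
      Complex.exp (-(Complex.I * (φ x : ℂ))) * (-(Complex.I * (Complex.ofReal (deriv φ x)))) :=
    fun x => (((hiφ x).neg).cexp).deriv
  have hdd : ∀ x, deriv (fun x =>
      Complex.exp (Complex.I * (φ x : ℂ)) * (Complex.I * (Complex.ofReal (deriv φ x)))) x =
      Complex.exp (Complex.I * (φ x : ℂ)) * (Complex.I * (Complex.ofReal (deriv φ x))) *
          (Complex.I * (Complex.ofReal (deriv φ x))) +
        Complex.exp (Complex.I * (φ x : ℂ)) * (Complex.I * (Complex.ofReal (deriv (deriv φ) x))) := by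
    intro x
    exact ((hu x).mul (((hφ'd x).hasDerivAt.ofReal_comp).const_mul Complex.I)).deriv
  refine Prod.ext ?_ ?_ <;> funext x <;>
    simp only [leftAct, rightAct, d0, Prod.fst_add, Prod.snd_add, Pi.add_apply,
      Pi.mul_apply, Pi.ofNat_apply, hcu, hdu, hcd, hdd,
      hderivsum, Complex.ofReal_add, Complex.ofReal_mul, Complex.ofReal_pow,
      Complex.ofReal_ofNat] <;>
  · simp only [Complex.exp_neg, u, Aconn]
    field_simp
    all_goals ring_nf
    try (simp only [Complex.I_sq]; ring_nf)
end
end
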